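/- Let N be a semifinite von Neumann algebra with faithful normal semifinite trace τ. The exponential map is a bijection from {x ∈ L¹_τ(N) : x = x*} onto {g ∈ N : g positive and invertible, g − 1 ∈ L¹_τ(N)}. Consequently, every positive invertible g with g − 1 ∈ L¹_τ(N) is connected to 1 by the continuous path t ↦ e^{t·log g} lying in the set of positive invertibles g' with g' − 1 ∈ L¹_τ(N). -/

import Mathlib

set_option synthInstance.maxHeartbeats 1000000
set_option maxHeartbeats 1000000

open scoped ENNReal NNReal

variable {H : Type} [NormedAddCommGroup H] [InnerProductSpace ℂ H] [CompleteSpace H]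

/-- The absolute value `|x| = (x*x)^{1/2}` of a bounded operator, via the
continuous functional calculus. -/
noncomputable def absOp (x : H →L[ℂ] H) : H →L[ℂ] H := CFC.sqrt (star x * x)

/-- `τ : N₊ → [0,∞]` is a faithful normal semifinite trace on the von Neumann algebra `N`.
The function `τ` is defined on all operators but its properties only concern positive
elements of `N`. -/
structure IsFNSTrace (N : VonNeumannAlgebra H) (τ : (H →L[ℂ] H) → ℝ≥0∞) : Prop where
  map_zero : τ 0 = 0
  additive : ∀ x y : H →L[ℂ] H, x ∈ N → y ∈ N → 0 ≤ x → 0 ≤ y → τ (x + y) = τ x + τ y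
  homogeneous : ∀ (c : ℝ≥0) (x : H →L[ℂ] H), x ∈ N → 0 ≤ x → τ (c • x) = c * τ x
  tracial : ∀ x : H →L[ℂ] H, x ∈ N → τ (star x * x) = τ (x * star x)
  faithful : ∀ x : H →L[ℂ] H, x ∈ N → 0 ≤ x → τ x = 0 → x = 0
  monotone : ∀ x y : H →L[ℂ] H, x ∈ N → y ∈ N → 0 ≤ x → x ≤ y → τ x ≤ τ y
  normal : ∀ (ι : Type) (_ : Preorder ι) (f : ι → (H →L[ℂ] H)) (x : H →L[ℂ] H),
      (∀ i, f i ∈ N) → (∀ i, 0 ≤ f i) → Monotone f → IsLUB (Set.range f) x →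
      τ x = ⨆ i, τ (f i)
  semifinite : ∀ x : H →L[ℂ] H, x ∈ N → 0 ≤ x → x ≠ 0 →
      ∃ y : H →L[ℂ] H, y ∈ N ∧ 0 ≤ y ∧ y ≤ x ∧ y ≠ 0 ∧ τ y < ∞

/-- Membership in the trace ideal `L¹_τ(N) = {x ∈ N : τ(|x|) < ∞}`. -/
def MemL1 (N : VonNeumannAlgebra H) (τ : (H →L[ℂ] H) → ℝ≥0∞) (x : H →L[ℂ] H) : Prop :=
  x ∈ N ∧ τ (absOp x) < ∞

/-- The norm `‖x‖_{1,∞} = ‖x‖ + τ(|x|)` on the trace ideal. -/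
noncomputable def normL1 (τ : (H →L[ℂ] H) → ℝ≥0∞) (x : H →L[ℂ] H) : ℝ :=
  ‖x‖ + (τ (absOp x)).toReal

/-!
Everything reduces to the functional calculus of a single self-adjoint element `x ∈ N`: if
`|f| ≤ c |h|` on the spectrum of `x`, then `|f(x)| ≤ c |h(x)|`, so the operator norm and
`τ(|·|)` of `f(x)` are at most `c` times those of `h(x)`.  With `h(r) = r - 1` and `f = log`
this puts `log g` in `L¹_τ(N)`, because `|log r| ≤ max 1 r⁻¹ |r - 1|` and the spectrum of a
positive invertible `g` is a compact subset of `(0, ∞)`.  With `h = id` and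
`f(u) = e^{su} - e^{tu}` it gives `‖e^{sx} - e^{tx}‖_{1,∞} ≤ |s - t| e^{max(|s|,|t|) B} ‖x‖_{1,∞}`
for a bound `B` of the spectrum, hence `e^{tx} - 1 ∈ L¹_τ(N)` and the continuity of
`t ↦ e^{t log g}`.  The inverse of `exp` is the functional-calculus logarithm.
-/

open Filter Topology

namespace Real

theorem abs_exp_sub_exp_le (a b : ℝ) : |exp a - exp b| ≤ |a - b| * exp (max a b) := by
  wlog hba : b ≤ a generalizing a b
  · rw [abs_sub_comm, abs_sub_comm a, max_comm]
    exact this b a (le_of_not_ge hba)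
  rw [max_eq_left hba, abs_of_nonneg (sub_nonneg.mpr (exp_le_exp.mpr hba)),
    abs_of_nonneg (sub_nonneg.mpr hba)]
  have h := mul_le_mul_of_nonneg_right (add_one_le_exp (b - a)) (exp_pos a).le
  rw [← exp_add, sub_add_cancel] at h
  linarith

theorem abs_exp_mul_sub_exp_mul_le {s t u B : ℝ} (hu : |u| ≤ B) :
    |exp (s * u) - exp (t * u)| ≤ |s - t| * exp (max |s| |t| * B) * |u| := by
  have hle : ∀ r, |r| ≤ max |s| |t| → r * u ≤ max |s| |t| * B := fun r hr =>
    (le_abs_self _).trans (abs_mul r u ▸ mul_le_mul hr hu (abs_nonneg u) ((abs_nonneg r).trans hr))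
  have hmax : max (s * u) (t * u) ≤ max |s| |t| * B :=
    max_le (hle s (le_max_left _ _)) (hle t (le_max_right _ _))
  calc |exp (s * u) - exp (t * u)| ≤ |s * u - t * u| * exp (max (s * u) (t * u)) :=
        abs_exp_sub_exp_le _ _
    _ ≤ |s * u - t * u| * exp (max |s| |t| * B) := by gcongr
    _ = |s - t| * exp (max |s| |t| * B) * |u| := by rw [← sub_mul, abs_mul]; ring

theorem abs_log_le_mul_abs_sub_one {r : ℝ} (hr : 0 < r) : |log r| ≤ max 1 r⁻¹ * |r - 1| := by
  rcases le_total 1 r with h | h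
  · rw [abs_of_nonneg (log_nonneg h), abs_of_nonneg (sub_nonneg.mpr h)]
    exact (log_le_sub_one_of_pos hr).trans (le_mul_of_one_le_left (by linarith) (le_max_left _ _))
  · rw [abs_of_nonpos (log_nonpos hr.le h), abs_of_nonpos (sub_nonpos.mpr h)]
    calc -log r ≤ r⁻¹ * -(r - 1) := by
          have := one_sub_inv_le_log_of_pos hr
          rw [mul_neg, mul_sub, inv_mul_cancel₀ hr.ne']
          linarith
      _ ≤ max 1 r⁻¹ * -(r - 1) := mul_le_mul_of_nonneg_right (le_max_right _ _) (by linarith)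

end Real

section CStarAlgebra

variable {A : Type*} [CStarAlgebra A] {a : A}

theorem exists_abs_le_of_mem_spectrum (a : A) : ∃ B, ∀ u ∈ spectrum ℝ a, |u| ≤ B :=
  (spectrum.isCompact (𝕜 := ℝ) a).exists_bound_of_continuousOn continuousOn_id

theorem CFC.log_cfc_exp (ha : IsSelfAdjoint a) : CFC.log (cfc Real.exp a) = a := by
  rw [CFC.real_exp_eq_normedSpace_exp ha, CFC.log_exp a ha]

variable [PartialOrder A] [StarOrderedRing A] {f h : ℝ → ℝ} {c : ℝ}

theorem CFC.abs_cfc (ha : IsSelfAdjoint a) (hf : ContinuousOn f (spectrum ℝ a)) :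
    CFC.abs (cfc f a) = cfc (fun u => |f u|) a := by
  rw [CFC.abs_eq_cfc_norm _ (cfc_predicate f a), ← cfc_comp' _ f a]
  rfl

theorem CFC.abs_cfc_le_smul (ha : IsSelfAdjoint a) (hf : ContinuousOn f (spectrum ℝ a))
    (hh : ContinuousOn h (spectrum ℝ a)) (hfh : ∀ u ∈ spectrum ℝ a, |f u| ≤ c * |h u|) :
    CFC.abs (cfc f a) ≤ c • CFC.abs (cfc h a) := by
  rw [CFC.abs_cfc ha hf, CFC.abs_cfc ha hh, ← cfc_smul c _ a]
  exact cfc_mono hfh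

theorem norm_cfc_le_mul_norm_cfc (ha : IsSelfAdjoint a) (hf : ContinuousOn f (spectrum ℝ a))
    (hh : ContinuousOn h (spectrum ℝ a)) (hc : 0 ≤ c)
    (hfh : ∀ u ∈ spectrum ℝ a, |f u| ≤ c * |h u|) :
    ‖cfc f a‖ ≤ c * ‖cfc h a‖ := by
  rw [← CFC.norm_abs, ← CFC.norm_abs (a := cfc h a), ← abs_of_nonneg hc, ← Real.norm_eq_abs,
    ← norm_smul]
  exact CStarAlgebra.norm_le_norm_of_nonneg_of_le (CFC.abs_nonneg _)
    (CFC.abs_cfc_le_smul ha hf hh hfh)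

theorem CFC.cfc_exp_log (ha : IsStrictlyPositive a) : cfc Real.exp (CFC.log a) = a := by
  rw [CFC.real_exp_eq_normedSpace_exp IsSelfAdjoint.log, CFC.exp_log a ha]

theorem CFC.cfc_exp_mul_log (ha : IsStrictlyPositive a) (t : ℝ) :
    cfc (fun r => Real.exp (t * Real.log r)) a = cfc (fun u => Real.exp (t * u)) (CFC.log a) := by
  have hspec : ∀ r ∈ spectrum ℝ a, r ≠ 0 := fun r hr => (ha.spectrum_pos hr).ne'
  rw [CFC.log, ← cfc_comp' (fun u => Real.exp (t * u)) Real.log a (by fun_prop)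
    (by fun_prop (disch := exact hspec))]

end CStarAlgebra

theorem VonNeumannAlgebra.isClosed (N : VonNeumannAlgebra H) :
    IsClosed (N : Set (H →L[ℂ] H)) :=
  N.centralizer_centralizer ▸ Set.isClosed_centralizer _

theorem VonNeumannAlgebra.cfc_mem (N : VonNeumannAlgebra H) {x : H →L[ℂ] H} (hx : x ∈ N)
    (f : ℝ → ℝ) : cfc f x ∈ N :=
  _root_.cfc_mem (s := N.toStarSubalgebra) (hs := N.isClosed) (𝕜' := ℂ) f hx

theorem normL1_nonneg (τ : (H →L[ℂ] H) → ℝ≥0∞) (x : H →L[ℂ] H) : 0 ≤ normL1 τ x :=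
  add_nonneg (norm_nonneg x) ENNReal.toReal_nonneg

namespace IsFNSTrace

variable {N : VonNeumannAlgebra H} {τ : (H →L[ℂ] H) → ℝ≥0∞} {x y g : H →L[ℂ] H} {f h : ℝ → ℝ}
  {c : ℝ}

theorem map_smul_of_nonneg (hτ : IsFNSTrace N τ) (hy : y ∈ N) (hy0 : 0 ≤ y) (hc : 0 ≤ c) :
    τ (c • y) = ENNReal.ofReal c * τ y := by
  rw [ENNReal.ofReal, ← hτ.homogeneous c.toNNReal y hy hy0, NNReal.smul_def,
    Real.coe_toNNReal c hc]

theorem absOp_cfc_le_mul (hτ : IsFNSTrace N τ) (hxN : x ∈ N) (hx : IsSelfAdjoint x)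
    (hf : ContinuousOn f (spectrum ℝ x)) (hh : ContinuousOn h (spectrum ℝ x)) (hc : 0 ≤ c)
    (hfh : ∀ u ∈ spectrum ℝ x, |f u| ≤ c * |h u|) :
    τ (absOp (cfc f x)) ≤ ENNReal.ofReal c * τ (absOp (cfc h x)) := by
  have habs : ∀ k : ℝ → ℝ, ContinuousOn k (spectrum ℝ x) → absOp (cfc k x) ∈ N := fun k hk =>
    show CFC.abs (cfc k x) ∈ N from CFC.abs_cfc hx hk ▸ N.cfc_mem hxN _
  rw [← hτ.map_smul_of_nonneg (habs h hh) (CFC.abs_nonneg _) hc]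
  exact hτ.monotone _ _ (habs f hf) (N.toStarSubalgebra.smul_mem (habs h hh) (c : ℂ))
    (CFC.abs_nonneg _) (CFC.abs_cfc_le_smul hx hf hh hfh)

theorem memL1_cfc (hτ : IsFNSTrace N τ) (hxN : x ∈ N) (hx : IsSelfAdjoint x)
    (hf : ContinuousOn f (spectrum ℝ x)) (hh : ContinuousOn h (spectrum ℝ x)) (hc : 0 ≤ c)
    (hfh : ∀ u ∈ spectrum ℝ x, |f u| ≤ c * |h u|) (hfin : τ (absOp (cfc h x)) ≠ ∞) :
    MemL1 N τ (cfc f x) :=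
  ⟨N.cfc_mem hxN f, (hτ.absOp_cfc_le_mul hxN hx hf hh hc hfh).trans_lt
    (ENNReal.mul_lt_top ENNReal.ofReal_lt_top hfin.lt_top)⟩

theorem normL1_cfc_le_mul (hτ : IsFNSTrace N τ) (hxN : x ∈ N) (hx : IsSelfAdjoint x)
    (hf : ContinuousOn f (spectrum ℝ x)) (hh : ContinuousOn h (spectrum ℝ x)) (hc : 0 ≤ c)
    (hfh : ∀ u ∈ spectrum ℝ x, |f u| ≤ c * |h u|) (hfin : τ (absOp (cfc h x)) ≠ ∞) :
    normL1 τ (cfc f x) ≤ c * normL1 τ (cfc h x) := by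
  have htrace := ENNReal.toReal_mono (ENNReal.mul_ne_top ENNReal.ofReal_ne_top hfin)
    (hτ.absOp_cfc_le_mul hxN hx hf hh hc hfh)
  rw [ENNReal.toReal_mul, ENNReal.toReal_ofReal hc] at htrace
  rw [normL1, normL1, mul_add]
  exact add_le_add (norm_cfc_le_mul_norm_cfc hx hf hh hc hfh) htrace

theorem memL1_cfc_exp_mul_sub (hτ : IsFNSTrace N τ) (hxN : x ∈ N) (hx : IsSelfAdjoint x)
    (hxfin : τ (absOp x) ≠ ∞) (s t : ℝ) :
    MemL1 N τ (cfc (fun u => Real.exp (s * u)) x - cfc (fun u => Real.exp (t * u)) x) := by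
  obtain ⟨B, hB⟩ := exists_abs_le_of_mem_spectrum x
  rw [← cfc_sub (fun u => Real.exp (s * u)) (fun u => Real.exp (t * u)) x]
  refine hτ.memL1_cfc hxN hx (h := fun u => u) (by fun_prop) (by fun_prop) (by positivity)
    (fun u hu => Real.abs_exp_mul_sub_exp_mul_le (hB u hu)) ?_
  rwa [cfc_id' ℝ x]

theorem normL1_cfc_exp_mul_sub_le (hτ : IsFNSTrace N τ) (hxN : x ∈ N) (hx : IsSelfAdjoint x)
    (hxfin : τ (absOp x) ≠ ∞) {B : ℝ} (hB : ∀ u ∈ spectrum ℝ x, |u| ≤ B) (s t : ℝ) :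
    normL1 τ (cfc (fun u => Real.exp (s * u)) x - cfc (fun u => Real.exp (t * u)) x) ≤
      |s - t| * Real.exp (max |s| |t| * B) * normL1 τ x := by
  rw [← cfc_sub (fun u => Real.exp (s * u)) (fun u => Real.exp (t * u)) x]
  calc _ ≤ |s - t| * Real.exp (max |s| |t| * B) * normL1 τ (cfc (fun u => u) x) :=
        hτ.normL1_cfc_le_mul hxN hx (by fun_prop) (by fun_prop) (by positivity)
          (fun u hu => Real.abs_exp_mul_sub_exp_mul_le (hB u hu)) (by rwa [cfc_id' ℝ x])
    _ = _ := by rw [cfc_id' ℝ x]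

theorem tendsto_normL1_cfc_exp_mul_sub (hτ : IsFNSTrace N τ) (hxN : x ∈ N)
    (hx : IsSelfAdjoint x) (hxfin : τ (absOp x) ≠ ∞) (t : ℝ) :
    Tendsto (fun s => normL1 τ (cfc (fun u => Real.exp (s * u)) x -
      cfc (fun u => Real.exp (t * u)) x)) (𝓝 t) (𝓝 0) := by
  obtain ⟨B, hB⟩ := exists_abs_le_of_mem_spectrum x
  refine squeeze_zero (fun s => normL1_nonneg τ _)
    (fun s => hτ.normL1_cfc_exp_mul_sub_le hxN hx hxfin hB s t) ?_
  have hbound : Continuous fun s => |s - t| * Real.exp (max |s| |t| * B) * normL1 τ x := by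
    fun_prop
  simpa using hbound.tendsto t

theorem cfc_exp_mul_mem (hτ : IsFNSTrace N τ) (hxN : x ∈ N) (hx : IsSelfAdjoint x)
    (hxfin : τ (absOp x) ≠ ∞) (t : ℝ) :
    cfc (fun u => Real.exp (t * u)) x ∈
      {g : H →L[ℂ] H | g ∈ N ∧ 0 ≤ g ∧ IsUnit g ∧ MemL1 N τ (g - 1)} := by
  refine ⟨N.cfc_mem hxN _, cfc_nonneg fun u _ => (Real.exp_pos _).le,
    (isUnit_cfc_iff _ x (by fun_prop) hx).mpr fun u _ => (Real.exp_pos _).ne', ?_⟩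
  simpa [cfc_const_one ℝ x] using hτ.memL1_cfc_exp_mul_sub hxN hx hxfin t 0

theorem memL1_log (hτ : IsFNSTrace N τ) (hgN : g ∈ N) (hg : IsStrictlyPositive g)
    (hgfin : τ (absOp (g - 1)) ≠ ∞) : MemL1 N τ (CFC.log g) := by
  have hspec : ∀ r ∈ spectrum ℝ g, r ≠ 0 := fun r hr => (hg.spectrum_pos hr).ne'
  obtain ⟨C, hC⟩ := (spectrum.isCompact (𝕜 := ℝ) g).exists_bound_of_continuousOn
    (f := fun r => max 1 r⁻¹) (by fun_prop (disch := exact hspec))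
  refine hτ.memL1_cfc hgN hg.isSelfAdjoint (h := fun r => r - 1) (c := |C|)
    (by fun_prop (disch := exact hspec)) (by fun_prop) (abs_nonneg C) (fun r hr => ?_) ?_
  · have hCr : max 1 r⁻¹ ≤ |C| := (le_abs_self _).trans ((hC r hr).trans (le_abs_self C))
    exact (Real.abs_log_le_mul_abs_sub_one (hg.spectrum_pos hr)).trans
      (mul_le_mul_of_nonneg_right hCr (abs_nonneg _))
  · rwa [cfc_sub (fun r => r) (fun _ => 1) g, cfc_id' ℝ g, cfc_const_one ℝ g]

end IsFNSTrace

/-- The exponential map is a bijection from the self-adjoint part of `L¹_τ(N)` onto the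
set of positive invertible elements `g` of `N` with `g - 1 ∈ L¹_τ(N)`.  Consequently,
every such `g` is connected to `1` by the `‖·‖_{1,∞}`-continuous path `t ↦ e^{t log g}`
lying in the positive invertibles `g'` with `g' - 1 ∈ L¹_τ(N)`. -/
theorem exp_bijection_positive_invertibles (N : VonNeumannAlgebra H)
    (τ : (H →L[ℂ] H) → ℝ≥0∞) (hτ : IsFNSTrace N τ) :
    Set.BijOn (fun x : H →L[ℂ] H => cfc Real.exp x)
      {x : H →L[ℂ] H | MemL1 N τ x ∧ IsSelfAdjoint x}
      {g : H →L[ℂ] H | g ∈ N ∧ 0 ≤ g ∧ IsUnit g ∧ MemL1 N τ (g - 1)} ∧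
    ∀ g : H →L[ℂ] H, g ∈ N → 0 ≤ g → IsUnit g → MemL1 N τ (g - 1) →
      (let γ : ℝ → (H →L[ℂ] H) := fun t => cfc (fun r : ℝ => Real.exp (t * Real.log r)) g
       γ 0 = 1 ∧ γ 1 = g ∧
       (∀ t ∈ Set.Icc (0:ℝ) 1, γ t ∈ N ∧ 0 ≤ γ t ∧ IsUnit (γ t) ∧ MemL1 N τ (γ t - 1)) ∧
       (∀ t : ℝ, ∀ ε > (0:ℝ), ∃ δ > (0:ℝ), ∀ s : ℝ, |s - t| < δ →
          normL1 τ (γ s - γ t) < ε)) := by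
  have hlog : ∀ g ∈ {g : H →L[ℂ] H | g ∈ N ∧ 0 ≤ g ∧ IsUnit g ∧ MemL1 N τ (g - 1)},
      MemL1 N τ (CFC.log g) := fun g ⟨hgN, hg0, hgu, hg1⟩ =>
    hτ.memL1_log hgN (hgu.isStrictlyPositive hg0) hg1.2.ne
  refine ⟨Set.InvOn.bijOn (f' := CFC.log) ⟨fun x hx => CFC.log_cfc_exp hx.2,
      fun g hg => CFC.cfc_exp_log (hg.2.2.1.isStrictlyPositive hg.2.1)⟩
    (fun x ⟨hxL1, hx⟩ => by simpa using hτ.cfc_exp_mul_mem hxL1.1 hx hxL1.2.ne 1)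
    (fun g hg => ⟨hlog g hg, IsSelfAdjoint.log⟩), ?_⟩
  intro g hgN hg0 hgu hg1 γ
  have hg : IsStrictlyPositive g := hgu.isStrictlyPositive hg0
  obtain ⟨hxN, hxfin⟩ := hlog g ⟨hgN, hg0, hgu, hg1⟩
  have hγ : ∀ t, γ t = cfc (fun u => Real.exp (t * u)) (CFC.log g) := CFC.cfc_exp_mul_log hg
  refine ⟨?_, ?_, fun t _ => hγ t ▸ hτ.cfc_exp_mul_mem hxN IsSelfAdjoint.log hxfin.ne t,
    fun t ε hε => ?_⟩
  · simp [hγ, cfc_const_one ℝ (CFC.log g)]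
  · simpa [hγ] using CFC.cfc_exp_log hg
  · obtain ⟨δ, hδ, hs⟩ := Metric.tendsto_nhds_nhds.mp
      (hτ.tendsto_normL1_cfc_exp_mul_sub hxN IsSelfAdjoint.log hxfin.ne t) ε hε
    exact ⟨δ, hδ, fun s hst => by
      simpa [hγ, Real.dist_eq, abs_of_nonneg (normL1_nonneg τ _)] using hs hst⟩
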